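/- arXiv:1801.08704 — 6 statements merged into one kernel-verified Lean document; each statement's English description precedes it below -/
import Mathlib

section
/- Fix real constants A > 0, M ≥ 0, γ > 0, b > 1, ρ0 ∈ (0,1), and J > (M/(Aρ0))·(e^{Aγ} − 1). Let z : ℝ → ℝ be differentiable on [t_s, t_c] with z'(t) = A·z(t) + w(t) and |w(t)| ≤ M for all t ∈ [t_s, t_c], suppose |z(t_s)| = J and 0 ≤ t_c − t_s ≤ γ, and let t_0 ∈ ℝ be such that t_s ∈ [t_0, t_0 + bγ]. If the packet size g ∈ ℕ satisfies g ≥ 1 + log₂( A·b·γ / ln(1 + (ρ0 − (M/(J·A))·(e^{Aγ}−1)) / e^{Aγ}) ), then there exists an index j ∈ {0, 1, …, 2^{g−1} − 1} such that, setting q := t_0 + j·bγ/2^{g−1}, the estimate z̄ := sign(z(t_s))·J·e^{A(t_c − q)} satisfies |z(t_c) − z̄| ≤ ρ0·J. (This is the per-triggering-event content of Theorem 1: a quantization policy using at most g bits — one bit for sign(z(t_s)) and g−1 bits for a uniformly quantized triggering time over a window of length bγ — achieves jump error at most ρ0·J.) -/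
/-!
Up to the disturbance, the plant is `ż = A z`, so `z(t_c)` is `z(t_s) e^{A(t_c - t_s)}` up to the
Grönwall error `(M/A)(e^{A(t_c-t_s)} - 1) ≤ (M/A)(e^{Aγ} - 1)`. The sign bit and `J` recover
`z(t_s)` exactly, so the only remaining error comes from replacing `t_s` by the grid point
`q ≤ t_s` just below it, and it is at most `J e^{Aγ} (e^{A(t_s - q)} - 1)`. With `g - 1` bits the
grid step is `bγ / 2^(g-1)`, and the bound on `g` is exactly what makes `e^{A·step} - 1` at most
`c = (ρ₀ - (M/(JA))(e^{Aγ}-1)) / e^{Aγ}`, for which the two errors add up to `ρ₀ J`.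
-/

open Set Filter

theorem Real.sign_mul_abs (x : ℝ) : Real.sign x * |x| = x := by
  rcases lt_trichotomy x 0 with hx | rfl | hx
  · rw [Real.sign_of_neg hx, abs_of_neg hx]; ring
  · simp
  · rw [Real.sign_of_pos hx, abs_of_pos hx]; ring

theorem abs_sub_mul_exp_le_of_hasDerivAt {A M ts tc : ℝ} {z w : ℝ → ℝ} (hA : 0 < A)
    (hle : ts ≤ tc) (hz : ∀ t ∈ Icc ts tc, HasDerivAt z (A * z t + w t) t)
    (hw : ∀ t ∈ Icc ts tc, |w t| ≤ M) :
    |z tc - z ts * Real.exp (A * (tc - ts))| ≤ M / A * (Real.exp (A * (tc - ts)) - 1) := by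
  have hexact : ∀ t, HasDerivAt (fun s => z ts * Real.exp (A * (s - ts)))
      (A * (z ts * Real.exp (A * (t - ts))) + 0) t := fun t =>
    ((((hasDerivAt_id' t).sub_const ts).const_mul A).exp.const_mul (z ts)).congr_deriv (by ring)
  have := dist_le_of_approx_trajectories_ODE (v := fun _ x => A • x) (K := ‖A‖₊)
    (fun _ => lipschitzWith_smul A) (f := z) (εf := M) (εg := 0) (δ := 0)
    (fun t ht => (hz t ht).continuousAt.continuousWithinAt)
    (fun t ht => (hz t (Ico_subset_Icc_self ht)).hasDerivWithinAt)
    (fun t ht => by simpa [Real.dist_eq] using hw t (Ico_subset_Icc_self ht))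
    (fun t _ => (hexact t).continuousAt.continuousWithinAt)
    (fun t _ => (hexact t).hasDerivWithinAt)
    (fun t _ => by simp)
    (by simp) tc (right_mem_Icc.2 hle)
  rw [gronwallBound_of_K_ne_0 (by simpa using hA.ne')] at this
  simpa [Real.dist_eq, abs_of_pos hA] using this

theorem exists_grid_point_mem_Icc {t0 L t : ℝ} {N : ℕ} (hL : 0 < L) (hN : 0 < N)
    (ht : t ∈ Icc t0 (t0 + L)) :
    ∃ j : ℕ, j < N ∧ t ∈ Icc (t0 + j * L / N) (t0 + j * L / N + L / N) := by
  set δ := L / N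
  have hδ : 0 < δ := div_pos hL (Nat.cast_pos.2 hN)
  set x := (t - t0) / δ
  have hx0 : 0 ≤ x := div_nonneg (by linarith [ht.1]) hδ.le
  have hxN : x ≤ N := by
    rw [div_le_iff₀ hδ, mul_div_cancel₀ L (Nat.cast_pos.2 hN).ne']
    linarith [ht.2]
  -- the cell index is `⌊x⌋₊`, except at the right end point `x = N`
  obtain ⟨j, hjN, hjx, hxj⟩ : ∃ j : ℕ, j < N ∧ (j : ℝ) ≤ x ∧ x ≤ j + 1 := by
    rcases hxN.lt_or_eq with hlt | heq
    · exact ⟨⌊x⌋₊, (Nat.floor_lt hx0).2 hlt, Nat.floor_le hx0,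
        (Nat.lt_floor_add_one x).le⟩
    · refine ⟨N - 1, Nat.sub_one_lt hN.ne', ?_, ?_⟩ <;> rw [heq, Nat.cast_sub hN] <;> simp
  rw [le_div_iff₀ hδ] at hjx
  rw [div_le_iff₀ hδ] at hxj
  exact ⟨j, hjN, by rw [mul_div_assoc]; constructor <;> nlinarith⟩

theorem le_two_pow_of_one_add_logb_le {x : ℝ} {g : ℕ} (h : 1 + Real.logb 2 x ≤ g) :
    x ≤ 2 ^ (g - 1) := by
  rcases le_or_gt x 0 with hx | hx
  · exact hx.trans (by positivity)
  have hg : (g : ℝ) - 1 ≤ ((g - 1 : ℕ) : ℝ) := by rcases g with _ | g <;> simp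
  rw [← Real.rpow_natCast, ← Real.logb_le_iff_le_rpow one_lt_two hx]
  linarith

theorem sub_div_mul_pos_of_div_mul_lt {A M ρ J x : ℝ} (hA : 0 < A) (hρ : 0 < ρ) (hJ : 0 < J)
    (h : M / (A * ρ) * x < J) : 0 < ρ - M / (J * A) * x := by
  rw [div_mul_eq_mul_div, div_lt_iff₀ (mul_pos hA hρ)] at h
  rw [sub_pos, div_mul_eq_mul_div, div_lt_iff₀ (mul_pos hJ hA)]
  linarith

theorem abs_sub_mul_exp_add_le (x y a : ℝ) {b : ℝ} (hb : 0 ≤ b) :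
    |x - y * Real.exp (a + b)| ≤
      |x - y * Real.exp a| + |y| * Real.exp a * (Real.exp b - 1) := by
  have hy : |y * Real.exp a - y * Real.exp (a + b)| = |y| * Real.exp a * (Real.exp b - 1) := by
    rw [show y * Real.exp a - y * Real.exp (a + b) = -(y * Real.exp a * (Real.exp b - 1)) by
        rw [Real.exp_add]; ring,
      abs_neg, abs_mul, abs_mul, abs_of_pos (Real.exp_pos a),
      abs_of_nonneg (sub_nonneg.2 (Real.one_le_exp hb))]
  rw [← hy]
  exact abs_sub_le _ _ _

theorem suff_packet_size_general
    (A M γ b ρ0 J : ℝ) (z w : ℝ → ℝ) (ts tc t0 : ℝ) (g : ℕ)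
    (hA : 0 < A) (hM : 0 ≤ M) (hγ : 0 < γ) (hb : 1 < b)
    (hρ0 : 0 < ρ0)
    (hJ : (M / (A * ρ0)) * (Real.exp (A * γ) - 1) < J)
    (hz : ∀ t ∈ Icc ts tc, HasDerivAt z (A * z t + w t) t)
    (hw : ∀ t ∈ Icc ts tc, |w t| ≤ M)
    (hzts : |z ts| = J)
    (hdelay0 : 0 ≤ tc - ts) (hdelayγ : tc - ts ≤ γ)
    (hts : ts ∈ Icc t0 (t0 + b * γ))
    (hg : (g : ℝ) ≥ 1 + Real.logb 2 (A * b * γ /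
      Real.log (1 + (ρ0 - (M / (J * A)) * (Real.exp (A * γ) - 1)) / Real.exp (A * γ)))) :
    ∃ j : ℕ, j < 2 ^ (g - 1) ∧
      |z tc - Real.sign (z ts) * J *
        Real.exp (A * (tc - (t0 + (j : ℝ) * (b * γ) / (2 : ℝ) ^ (g - 1))))| ≤ ρ0 * J := by
  set E := Real.exp (A * γ)
  set c := (ρ0 - M / (J * A) * (E - 1)) / E
  have hE : 1 ≤ E := Real.one_le_exp (mul_pos hA hγ).le
  have hJ0 : 0 < J :=
    (mul_nonneg (div_nonneg hM (mul_pos hA hρ0).le) (sub_nonneg.2 hE)).trans_lt hJ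
  have hc : 0 < c := div_pos (sub_div_mul_pos_of_div_mul_lt hA hρ0 hJ0 hJ) (Real.exp_pos _)
  have hbγ : 0 < b * γ := mul_pos (by linarith) hγ
  obtain ⟨j, hjN, hqts, htsq⟩ := exists_grid_point_mem_Icc hbγ (Nat.two_pow_pos (g - 1)) hts
  push_cast at hjN hqts htsq
  refine ⟨j, hjN, ?_⟩
  set q := t0 + (j : ℝ) * (b * γ) / (2 : ℝ) ^ (g - 1)
  have hq : 0 ≤ A * (ts - q) := mul_nonneg hA.le (sub_nonneg.2 hqts)
  have hcell : Real.exp (A * (ts - q)) - 1 ≤ c := by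
    have hstep := (div_le_iff₀ (Real.log_pos (by linarith))).1 (le_two_pow_of_one_add_logb_le hg)
    rw [sub_le_iff_le_add', ← Real.le_log_iff_exp_le (by linarith)]
    calc A * (ts - q) ≤ A * (b * γ / 2 ^ (g - 1)) := by gcongr; linarith
      _ ≤ Real.log (1 + c) := by
        rw [← mul_div_assoc, div_le_iff₀ (by positivity), ← mul_assoc]; linarith
  have hdelay : Real.exp (A * (tc - ts)) ≤ E :=
    Real.exp_le_exp.2 (mul_le_mul_of_nonneg_left hdelayγ hA.le)
  calc |z tc - Real.sign (z ts) * J * Real.exp (A * (tc - q))|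
      = |z tc - z ts * Real.exp (A * (tc - ts) + A * (ts - q))| := by
        rw [← hzts, Real.sign_mul_abs]; ring_nf
    _ ≤ |z tc - z ts * Real.exp (A * (tc - ts))|
        + |z ts| * Real.exp (A * (tc - ts)) * (Real.exp (A * (ts - q)) - 1) :=
      abs_sub_mul_exp_add_le _ _ _ hq
    _ ≤ M / A * (E - 1) + J * E * c := by
      gcongr
      · exact (abs_sub_mul_exp_le_of_hasDerivAt hA (sub_nonneg.1 hdelay0) hz hw).trans (by gcongr)
      · exact sub_nonneg.2 (Real.one_le_exp hq)
      · exact hzts.le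
    _ = ρ0 * J := by simp only [c]; field_simp; ring

/-- **Theorem 1 (per-triggering-event form).**
With `g` bits (one for the sign, `g − 1` for a uniformly quantized triggering
time over a window of length `b*γ`), where
`g ≥ 1 + log₂(A*b*γ / ln(1 + (ρ0 − (M/(J*A))(e^{Aγ}−1))/e^{Aγ}))`,
there is a grid point `q = t₀ + j*b*γ/2^(g-1)` such that the controller
estimate `z̄ = sign(z(t_s))·J·e^{A(t_c − q)}` satisfies `|z(t_c) − z̄| ≤ ρ0·J`. -/
theorem suff_packet_size
    (A M γ b ρ0 J : ℝ) (z w : ℝ → ℝ) (ts tc t0 : ℝ) (g : ℕ)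
    (hA : 0 < A) (hM : 0 ≤ M) (hγ : 0 < γ) (hb : 1 < b)
    (hρ0 : 0 < ρ0) (hρ1 : ρ0 < 1)
    (hJ : (M / (A * ρ0)) * (Real.exp (A * γ) - 1) < J)
    (hz : ∀ t ∈ Icc ts tc, HasDerivAt z (A * z t + w t) t)
    (hw : ∀ t ∈ Icc ts tc, |w t| ≤ M)
    (hzts : |z ts| = J)
    (hdelay0 : 0 ≤ tc - ts) (hdelayγ : tc - ts ≤ γ)
    (hts : ts ∈ Icc t0 (t0 + b * γ))
    (hg : (g : ℝ) ≥ 1 + Real.logb 2 (A * b * γ /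
      Real.log (1 + (ρ0 - (M / (J * A)) * (Real.exp (A * γ) - 1)) / Real.exp (A * γ)))) :
    ∃ j : ℕ, j < 2 ^ (g - 1) ∧
      |z tc - Real.sign (z ts) * J *
        Real.exp (A * (tc - (t0 + (j : ℝ) * (b * γ) / (2 : ℝ) ^ (g - 1))))| ≤ ρ0 * J :=
  suff_packet_size_general A M γ b ρ0 J z w ts tc t0 g hA hM hγ hb hρ0 hJ hz hw hzts hdelay0 hdelayγ
    hts hg
end

section
/- Fix real constants A > 0, M ≥ 0, J > 0, and ρ0 ∈ (0,1). Let z : ℝ → ℝ be differentiable on [t₀, t₁] with z'(t) = A·z(t) + w(t) and |w(t)| ≤ M for all t ∈ [t₀, t₁]. If |z(t₀)| ≤ ρ0·J and |z(t₁)| ≥ J, then t₁ − t₀ ≥ (1/A)·ln( (J + M/A) / (ρ0·J + M/A) ). (Lemma 2: the time needed for the estimation error to grow from ρ0·J to the triggering threshold J is uniformly lower-bounded, so the event-triggered scheme exhibits no Zeno behavior.) -/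
/-!
Grönwall's inequality applied to `z' = A z + w` with `|w| ≤ M` gives
`|z t| + M/A ≤ (|z t₀| + M/A) e^{A (t - t₀)}`. Since the threshold `J` is reached at `t₁`
starting from `|z t₀| ≤ ρ0 J`, taking logarithms bounds `A (t₁ - t₀)` from below.
-/

open Set Real

theorem gronwallBound_add_div {δ K ε : ℝ} (hK : K ≠ 0) (x : ℝ) :
    gronwallBound δ K ε x + ε / K = (δ + ε / K) * exp (K * x) := by
  rw [gronwallBound_of_K_ne_0 hK]
  ring

theorem one_div_mul_log_le_of_le_gronwallBound {δ K ε J x : ℝ} (hK : 0 < K)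
    (hδ : 0 < δ + ε / K) (hJ : 0 < J + ε / K) (h : J ≤ gronwallBound δ K ε x) :
    1 / K * log ((J + ε / K) / (δ + ε / K)) ≤ x := by
  have hexp : J + ε / K ≤ (δ + ε / K) * exp (K * x) := by
    rw [← gronwallBound_add_div hK.ne']
    linarith
  have hlog : log ((J + ε / K) / (δ + ε / K)) ≤ K * x := by
    rw [log_le_iff_le_exp (by positivity), div_le_iff₀ hδ, mul_comm]
    exact hexp
  rw [one_div_mul_eq_div, div_le_iff₀' hK]
  exact hlog

theorem norm_le_gronwallBound_of_hasDerivAt_smul_add {E : Type*} [NormedAddCommGroup E]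
    [NormedSpace ℝ E] {z w : ℝ → E} {A M δ a b : ℝ}
    (hz : ∀ t ∈ Icc a b, HasDerivAt z (A • z t + w t) t) (hw : ∀ t ∈ Icc a b, ‖w t‖ ≤ M)
    (ha : ‖z a‖ ≤ δ) : ∀ t ∈ Icc a b, ‖z t‖ ≤ gronwallBound δ |A| M (t - a) := by
  refine norm_le_gronwallBound_of_norm_deriv_right_le
    (fun t ht => (hz t ht).continuousAt.continuousWithinAt)
    (fun t ht => (hz t (Ico_subset_Icc_self ht)).hasDerivWithinAt) ha fun t ht => ?_
  calc ‖A • z t + w t‖ ≤ ‖A • z t‖ + ‖w t‖ := norm_add_le _ _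
    _ ≤ |A| * ‖z t‖ + M := by
      rw [norm_smul, Real.norm_eq_abs]
      exact add_le_add_right (hw t (Ico_subset_Icc_self ht)) _

theorem inter_event_time_lower_bound_general
    (A M J ρ0 : ℝ) (z w : ℝ → ℝ) (t₀ t₁ : ℝ)
    (hA : 0 < A) (hM : 0 ≤ M) (hJ : 0 < J)
    (hρ0 : 0 < ρ0)
    (h01 : t₀ ≤ t₁)
    (hz : ∀ t ∈ Icc t₀ t₁, HasDerivAt z (A * z t + w t) t)
    (hw : ∀ t ∈ Icc t₀ t₁, |w t| ≤ M)
    (hz0 : |z t₀| ≤ ρ0 * J)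
    (hz1 : |z t₁| ≥ J) :
    t₁ - t₀ ≥ (1 / A) * Real.log ((J + M / A) / (ρ0 * J + M / A)) := by
  have hgrowth := norm_le_gronwallBound_of_hasDerivAt_smul_add hz hw hz0 t₁ ⟨h01, le_rfl⟩
  rw [abs_of_pos hA] at hgrowth
  exact one_div_mul_log_le_of_le_gronwallBound hA (by positivity) (by positivity)
    (hz1.trans hgrowth)

/-- **Lemma 2 (no Zeno behavior).** The time needed for the estimation error
to grow from `ρ0·J` to the triggering threshold `J` is uniformly lower
bounded: if `|z(t₀)| ≤ ρ0·J` and `|z(t₁)| ≥ J`, then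
`t₁ − t₀ ≥ (1/A)·ln((J + M/A)/(ρ0·J + M/A))`. -/
theorem inter_event_time_lower_bound
    (A M J ρ0 : ℝ) (z w : ℝ → ℝ) (t₀ t₁ : ℝ)
    (hA : 0 < A) (hM : 0 ≤ M) (hJ : 0 < J)
    (hρ0 : 0 < ρ0) (hρ1 : ρ0 < 1)
    (h01 : t₀ ≤ t₁)
    (hz : ∀ t ∈ Icc t₀ t₁, HasDerivAt z (A * z t + w t) t)
    (hw : ∀ t ∈ Icc t₀ t₁, |w t| ≤ M)
    (hz0 : |z t₀| ≤ ρ0 * J)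
    (hz1 : |z t₁| ≥ J) :
    t₁ - t₀ ≥ (1 / A) * Real.log ((J + M / A) / (ρ0 * J + M / A)) :=
  inter_event_time_lower_bound_general A M J ρ0 z w t₀ t₁ hA hM hJ hρ0 h01 hz hw hz0 hz1
end

section
/- Fix real constants A > 0 and M ≥ 0. Let z : ℝ → ℝ be differentiable on [t₀, t₁] with z'(t) = A·z(t) + w(t) and |w(t)| ≤ M for all t ∈ [t₀, t₁]. If z(t₀) > (M/A)·(1 − e^{−A(t₁ − t₀)}), then z(t) > 0 for all t ∈ [t₀, t₁]. In particular, if at a triggering event z(t_s) = J with J > (M/A)·(1 − e^{−Aγ}) and t₁ − t₀ ≤ γ, then the sign of z is preserved throughout the communication delay interval, so the single transmitted bit sign(z(t_s)) correctly determines the sign of z(t_c). -/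
/-!
Variation of constants: `e^{-A(t-t₀)} z(t) + (M/A)(1 - e^{-A(t-t₀)})` has derivative
`e^{-A(t-t₀)} (w(t) + M) ≥ 0`, so `e^{-A(t-t₀)} z(t) ≥ z(t₀) - (M/A)(1 - e^{-A(t-t₀)})`,
and the subtracted drift only grows with `t`. A negative `z(t₀)` is handled by applying this
to `-z`.
-/

open Set Real

noncomputable def driftBound (A M s : ℝ) : ℝ := M / A * (1 - exp (-(A * s)))

@[simp]
lemma driftBound_zero (A M : ℝ) : driftBound A M 0 = 0 := by
  simp [driftBound]

lemma monotone_driftBound (A : ℝ) {M : ℝ} (hM : 0 ≤ M) : Monotone (driftBound A M) := by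
  intro s s' hss'
  unfold driftBound
  rcases lt_trichotomy A 0 with hA | rfl | hA
  · have hexp : exp (-(A * s)) ≤ exp (-(A * s')) := exp_le_exp.mpr (by nlinarith)
    exact mul_le_mul_of_nonpos_left (by linarith) (div_nonpos_of_nonneg_of_nonpos hM hA.le)
  · simp
  · have hexp : exp (-(A * s')) ≤ exp (-(A * s)) := exp_le_exp.mpr (by nlinarith)
    exact mul_le_mul_of_nonneg_left (by linarith) (div_nonneg hM hA.le)

section Comparison

variable {A M : ℝ} {z w : ℝ → ℝ} {a b : ℝ}

lemma hasDerivAt_exp_mul_add_driftBound (hA : A ≠ 0) {t z' : ℝ} (hz : HasDerivAt z z' t) :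
    HasDerivAt (fun t ↦ exp (-(A * (t - a))) * z t + driftBound A M (t - a))
      (exp (-(A * (t - a))) * (z' - A * z t + M)) t := by
  have hexp : HasDerivAt (fun t ↦ exp (-(A * (t - a)))) (exp (-(A * (t - a))) * -A) t := by
    simpa using ((((hasDerivAt_id t).sub_const a).const_mul A).neg).exp
  refine ((hexp.mul hz).add (((hasDerivAt_const t 1).sub hexp).const_mul (M / A))).congr_deriv ?_
  field_simp
  ring

lemma monotoneOn_exp_mul_add_driftBound (hA : A ≠ 0)
    (hz : ∀ t ∈ Icc a b, HasDerivAt z (A * z t + w t) t) (hw : ∀ t ∈ Icc a b, -M ≤ w t) :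
    MonotoneOn (fun t ↦ exp (-(A * (t - a))) * z t + driftBound A M (t - a)) (Icc a b) := by
  have hderiv := fun t ht ↦ hasDerivAt_exp_mul_add_driftBound (M := M) (a := a) hA (hz t ht)
  refine monotoneOn_of_hasDerivWithinAt_nonneg (convex_Icc a b)
    (fun t ht ↦ (hderiv t ht).continuousAt.continuousWithinAt)
    (fun t ht ↦ (hderiv t (interior_subset ht)).hasDerivWithinAt) fun t ht ↦ ?_
  have hwt := hw t (interior_subset ht)
  have : 0 ≤ A * z t + w t - A * z t + M := by linarith
  positivity

lemma pos_of_driftBound_lt (hA : A ≠ 0) (hM : 0 ≤ M)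
    (hz : ∀ t ∈ Icc a b, HasDerivAt z (A * z t + w t) t) (hw : ∀ t ∈ Icc a b, -M ≤ w t)
    (h₀ : driftBound A M (b - a) < z a) : ∀ t ∈ Icc a b, 0 < z t := by
  intro t ht
  have hmono := monotoneOn_exp_mul_add_driftBound hA hz hw
    (left_mem_Icc.mpr (ht.1.trans ht.2)) ht ht.1
  have hdrift : driftBound A M (t - a) ≤ driftBound A M (b - a) :=
    monotone_driftBound A hM (by linarith [ht.2])
  simp only [sub_self, mul_zero, neg_zero, exp_zero, one_mul, driftBound_zero,
    add_zero] at hmono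
  have : 0 < exp (-(A * (t - a))) * z t := by linarith
  exact pos_of_mul_pos_right this (exp_pos _).le

lemma sign_eq_of_driftBound_lt_abs (hA : A ≠ 0) (hM : 0 ≤ M)
    (hz : ∀ t ∈ Icc a b, HasDerivAt z (A * z t + w t) t) (hw : ∀ t ∈ Icc a b, |w t| ≤ M)
    (h₀ : driftBound A M (b - a) < |z a|) : ∀ t ∈ Icc a b, sign (z t) = sign (z a) := by
  intro t ht
  have ha : a ∈ Icc a b := left_mem_Icc.mpr (ht.1.trans ht.2)
  rcases abs_cases (z a) with ⟨habs, -⟩ | ⟨habs, -⟩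
  · have hpos := pos_of_driftBound_lt hA hM hz (fun t ht ↦ (abs_le.mp (hw t ht)).1)
      (habs ▸ h₀)
    rw [sign_of_pos (hpos t ht), sign_of_pos (hpos a ha)]
  · have hneg := pos_of_driftBound_lt (z := (-z ·)) (w := (-w ·)) hA hM
      (fun t ht ↦ (hz t ht).neg.congr_deriv (by ring))
      (fun t ht ↦ neg_le_neg (abs_le.mp (hw t ht)).2) (habs ▸ h₀)
    rw [sign_of_neg (neg_pos.mp (hneg t ht)), sign_of_neg (neg_pos.mp (hneg a ha))]

end Comparison

theorem sign_preservation_general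
    (A M : ℝ) (z w : ℝ → ℝ) (t₀ t₁ : ℝ)
    (hA : 0 < A) (hM : 0 ≤ M)
    (hz : ∀ t ∈ Icc t₀ t₁, HasDerivAt z (A * z t + w t) t)
    (hw : ∀ t ∈ Icc t₀ t₁, |w t| ≤ M) :
    ((M / A) * (1 - Real.exp (-(A * (t₁ - t₀)))) < z t₀ →
      ∀ t ∈ Icc t₀ t₁, 0 < z t) ∧
    (∀ J γ : ℝ, (M / A) * (1 - Real.exp (-(A * γ))) < J → |z t₀| = J →
      t₁ - t₀ ≤ γ → ∀ t ∈ Icc t₀ t₁, Real.sign (z t) = Real.sign (z t₀)) := by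
  refine ⟨pos_of_driftBound_lt hA.ne' hM hz fun t ht ↦ (abs_le.mp (hw t ht)).1,
    fun J γ hJ hzJ hγ ↦ sign_eq_of_driftBound_lt_abs hA.ne' hM hz hw ?_⟩
  calc driftBound A M (t₁ - t₀) ≤ driftBound A M γ := monotone_driftBound A hM hγ
    _ < |z t₀| := hzJ ▸ hJ

/-- Sign preservation of the estimation error across the delay interval:
if `ż = A·z + w` with `|w| ≤ M` on `[t₀, t₁]` and
`z(t₀) > (M/A)(1 − e^{−A(t₁−t₀)})`, then `z(t) > 0` on `[t₀, t₁]`.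
In particular, if `|z(t₀)| = J` with `J > (M/A)(1 − e^{−Aγ})` and
`t₁ − t₀ ≤ γ`, then the sign of `z` is preserved throughout `[t₀, t₁]`,
so the transmitted bit `sign(z(t_s))` correctly determines `sign(z(t_c))`. -/
theorem sign_preservation
    (A M : ℝ) (z w : ℝ → ℝ) (t₀ t₁ : ℝ)
    (hA : 0 < A) (hM : 0 ≤ M) (h01 : t₀ ≤ t₁)
    (hz : ∀ t ∈ Icc t₀ t₁, HasDerivAt z (A * z t + w t) t)
    (hw : ∀ t ∈ Icc t₀ t₁, |w t| ≤ M) :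
    ((M / A) * (1 - Real.exp (-(A * (t₁ - t₀)))) < z t₀ →
      ∀ t ∈ Icc t₀ t₁, 0 < z t) ∧
    (∀ J γ : ℝ, (M / A) * (1 - Real.exp (-(A * γ))) < J → |z t₀| = J →
      t₁ - t₀ ≤ γ → ∀ t ∈ Icc t₀ t₁, Real.sign (z t) = Real.sign (z t₀)) :=
  sign_preservation_general A M z w t₀ t₁ hA hM hz hw
end

section
/- Fix real constants A > 0, M ≥ 0, γ ≥ 0, J > 0, and ρ0 ∈ (0,1). Let (t_s^n)_{n≥1} and (t_c^n)_{n≥1} be sequences with 0 < t_s^1, t_s^n ≤ t_c^n ≤ t_s^n + γ, t_c^n ≤ t_s^{n+1}, and t_s^n → ∞. Let z : [0,∞) → ℝ be such that: (i) |z(t)| ≤ J for all t ∈ [0, t_s^1] and for all t ∈ (t_c^n, t_s^{n+1}] for every n; (ii) on each interval [t_s^n, t_c^n], z is differentiable with z'(t) = A·z(t) + w(t) where |w(t)| ≤ M, and |z(t_s^n)| = J. Then for every t ≥ 0, |z(t)| ≤ J·e^{Aγ} + (M/A)·(e^{Aγ} − 1). (Uniform bound on the state estimation error along the entire hybrid trajectory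 of the event-triggered scheme — the key intermediate claim in the proof of Theorem 2.) -/
open Set Filter

/-- **Uniform bound on the estimation error along the hybrid trajectory**
(key intermediate claim in the proof of Theorem 2). Between a reception and
the next triggering event the error satisfies `|z| ≤ J`, and on each interval
`[t_s^n, t_c^n]` it flows as `ż = A·z + w` with `|w| ≤ M` starting from
`|z(t_s^n)| = J` with delay at most `γ`; hence for all `t ≥ 0`,
`|z(t)| ≤ J·e^{Aγ} + (M/A)(e^{Aγ}−1)`. -/
theorem uniform_error_bound
    (A M γ J ρ0 : ℝ) (ts tc : ℕ → ℝ) (z w : ℝ → ℝ)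
    (hA : 0 < A) (hM : 0 ≤ M) (hγ : 0 ≤ γ) (hJ : 0 < J)
    (hρ0 : 0 < ρ0) (hρ1 : ρ0 < 1)
    (hts0 : 0 < ts 0)
    (hstc : ∀ n, ts n ≤ tc n)
    (hdelay : ∀ n, tc n ≤ ts n + γ)
    (horder : ∀ n, tc n ≤ ts (n + 1))
    (htop : Tendsto ts atTop atTop)
    (hbound0 : ∀ t ∈ Icc (0 : ℝ) (ts 0), |z t| ≤ J)
    (hboundn : ∀ n, ∀ t ∈ Ioc (tc n) (ts (n + 1)), |z t| ≤ J)
    (hz : ∀ n, ∀ t ∈ Icc (ts n) (tc n), HasDerivAt z (A * z t + w t) t)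
    (hw : ∀ n, ∀ t ∈ Icc (ts n) (tc n), |w t| ≤ M)
    (htrig : ∀ n, |z (ts n)| = J) :
    ∀ t ≥ (0 : ℝ), |z t| ≤ J * Real.exp (A * γ) + (M / A) * (Real.exp (A * γ) - 1) := by
  intro t ht
  have hexp1 : (1 : ℝ) ≤ Real.exp (A * γ) :=
    Real.one_le_exp (mul_nonneg hA.le hγ)
  have hJle : J ≤ J * Real.exp (A * γ) + (M / A) * (Real.exp (A * γ) - 1) := by
    nlinarith [div_nonneg hM hA.le]
  -- there is some N with t ≤ ts N
  have hex : ∃ n, t ≤ ts n := by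
    rcases (htop.eventually_ge_atTop t).exists with ⟨n, hn⟩
    exact ⟨n, hn⟩
  classical
  have hts : t ≤ ts (Nat.find hex) := Nat.find_spec hex
  cases hfind : Nat.find hex with
  | zero => exact le_trans (hbound0 t ⟨ht, by rwa [hfind] at hts⟩) hJle
  | succ m =>
    rw [hfind] at hts
    have hlt : ts m < t := by
      have := Nat.find_min hex (m := m) (by omega)
      push_neg at this
      exact this
    by_cases hc : t ≤ tc m
    · -- flow case: Grönwall on [ts m, tc m]
      have key := norm_le_gronwallBound_of_norm_deriv_right_le
        (f := z) (f' := fun s => A * z s + w s) (δ := J) (K := A) (ε := M)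
        (a := ts m) (b := tc m)
        (fun s hs => (hz m s hs).continuousAt.continuousWithinAt)
        (fun s hs => (hz m s ⟨hs.1, hs.2.le⟩).hasDerivWithinAt)
        (by simpa [Real.norm_eq_abs] using (htrig m).le)
        (by
          intro s hs
          have hws := hw m s ⟨hs.1, hs.2.le⟩
          have : |A * z s + w s| ≤ A * |z s| + M := by
            calc |A * z s + w s| ≤ |A * z s| + |w s| := abs_add_le _ _
              _ ≤ A * |z s| + M := by
                  rw [abs_mul, abs_of_pos hA]; linarith
          simpa [Real.norm_eq_abs] using this)
        t ⟨hlt.le, hc⟩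
      have hx : t - ts m ≤ γ := by
        have := hdelay m; linarith
      rw [gronwallBound_of_K_ne_0 (ne_of_gt hA)] at key
      simp only [Real.norm_eq_abs] at key
      refine key.trans ?_
      have hexp : Real.exp (A * (t - ts m)) ≤ Real.exp (A * γ) :=
        Real.exp_le_exp.2 (by nlinarith)
      have h1 : (1:ℝ) ≤ Real.exp (A * (t - ts m)) :=
        Real.one_le_exp (by nlinarith)
      have hMA : 0 ≤ M / A := div_nonneg hM hA.le
      have := mul_le_mul_of_nonneg_left hexp hJ.le
      have := mul_le_mul_of_nonneg_left (sub_le_sub_right hexp 1) hMA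
      gcongr <;> linarith
    · push_neg at hc
      exact le_trans (hboundn m t ⟨hc, hts⟩) hJle
end

section
/- Fix real constants A > 0, M ≥ 0, ρ0 ∈ (0,1), b > 1, and c > 0, and for γ > 0 define J(γ) := (M/(Aρ0))·(e^{Aγ} − 1) + c. Then there exists γ* > 0 such that for all γ ∈ (0, γ*), 1 + log₂( A·b·γ / ln(1 + (ρ0 − (M/(J(γ)·A))·(e^{Aγ} − 1))/e^{Aγ}) ) < 0; hence the sufficient packet size g*(γ) = max{0, 1 + log₂(Abγ/ln(1 + (ρ0 − (M/(J(γ)A))(e^{Aγ}−1))/e^{Aγ}))} equals 0 and the sufficient information transmission rate of Corollary 1 equals 0. (For sufficiently small communication delay, the timing information implicit in the triggering events suffices and the scheme stabilizes with transmission rate arbitrarily close to zero.) -/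
/-!
As `γ → 0` the threshold `J(γ)` tends to `c > 0`, so the post-jump factor
`1 + (ρ0 − (M/(J(γ)A))(e^{Aγ}−1))/e^{Aγ}` tends to `1 + ρ0 > 1` and its logarithm stays away
from `0`. Hence `Abγ / ln(⋯)` tends to `0` without vanishing, its base-2 logarithm tends to `−∞`,
and `1 + log₂(⋯)` is eventually negative.
-/

open Set Filter Topology Real

theorem eventually_one_add_logb_two_neg {α : Type*} {l : Filter α} {f : α → ℝ}
    (hf : Tendsto f l (𝓝[≠] 0)) : ∀ᶠ x in l, 1 + logb 2 (f x) < 0 :=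
  (((tendsto_logb_nhdsNE_zero one_lt_two).comp hf).eventually_lt_atBot (-1)).mono
    fun _ h ↦ by linarith [show logb 2 (f _) < -1 from h]

theorem tendsto_const_mul_div_nhdsNE_zero {k ℓ : ℝ} {L : ℝ → ℝ} (hk : k ≠ 0) (hℓ : ℓ ≠ 0)
    (hL : Tendsto L (𝓝 0) (𝓝 ℓ)) :
    Tendsto (fun γ ↦ k * γ / L γ) (𝓝[≠] 0) (𝓝[≠] 0) := by
  have hL' : Tendsto L (𝓝[≠] 0) (𝓝 ℓ) := hL.mono_left nhdsWithin_le_nhds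
  refine tendsto_nhdsWithin_iff.mpr ⟨?_, ?_⟩
  · simpa [Pi.div_def] using ((tendsto_id.mono_left nhdsWithin_le_nhds).const_mul k).div hL' hℓ
  · filter_upwards [self_mem_nhdsWithin, hL'.eventually_ne hℓ] with γ hγ hLγ
    exact div_ne_zero (mul_ne_zero hk hγ) hLγ

theorem tendsto_exp_const_mul_nhds_zero (A : ℝ) :
    Tendsto (fun γ ↦ exp (A * γ)) (𝓝 0) (𝓝 1) :=
  (by fun_prop : Continuous fun γ ↦ exp (A * γ)).tendsto' 0 1 (by simp)

theorem tendsto_post_jump_factor {A M ρ0 c : ℝ} {J : ℝ → ℝ} (hJ : Tendsto J (𝓝 0) (𝓝 c))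
    (hcA : c * A ≠ 0) :
    Tendsto (fun γ ↦ 1 + (ρ0 - M / (J γ * A) * (exp (A * γ) - 1)) / exp (A * γ))
      (𝓝 0) (𝓝 (1 + ρ0)) := by
  have hexp := tendsto_exp_const_mul_nhds_zero A
  have := (tendsto_const_nhds (x := 1)).add <| ((tendsto_const_nhds (x := ρ0)).sub <|
    ((tendsto_const_nhds (x := M)).div (hJ.mul_const A) hcA).mul (hexp.sub_const 1)).div
      hexp one_ne_zero
  simpa using this

theorem zero_rate_small_delay_general
    (A M ρ0 b c : ℝ) (J : ℝ → ℝ)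
    (hA : 0 < A)
    (hρ0 : 0 < ρ0)
    (hb : 1 < b) (hc : 0 < c)
    (hJ : ∀ γ, J γ = (M / (A * ρ0)) * (Real.exp (A * γ) - 1) + c) :
    ∃ γstar > (0 : ℝ), ∀ γ : ℝ, 0 < γ → γ < γstar →
      (1 + Real.logb 2 (A * b * γ /
          Real.log (1 + (ρ0 - (M / (J γ * A)) * (Real.exp (A * γ) - 1)) /
            Real.exp (A * γ))) < 0) ∧
      (max 0 (1 + Real.logb 2 (A * b * γ /
          Real.log (1 + (ρ0 - (M / (J γ * A)) * (Real.exp (A * γ) - 1)) /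
            Real.exp (A * γ)))) = 0) ∧
      ((A / Real.log ((J γ + M / A) / (ρ0 * J γ + M / A))) *
        max 0 (1 + Real.logb 2 (A * b * γ /
          Real.log (1 + (ρ0 - (M / (J γ * A)) * (Real.exp (A * γ) - 1)) /
            Real.exp (A * γ)))) = 0) := by
  have hJc : Tendsto J (𝓝 0) (𝓝 c) := by
    rw [funext hJ]
    simpa using ((tendsto_exp_const_mul_nhds_zero A).sub_const 1).const_mul (M / (A * ρ0))
      |>.add_const c
  have hlog := (continuousAt_log (by positivity)).tendsto.comp
    (tendsto_post_jump_factor (M := M) (ρ0 := ρ0) hJc (by positivity))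
  have hneg := eventually_one_add_logb_two_neg <|
    tendsto_const_mul_div_nhdsNE_zero (k := A * b) (by positivity)
      (log_pos (by linarith)).ne' hlog
  obtain ⟨γstar, hγstar, hsub⟩ :=
    mem_nhdsGT_iff_exists_Ioo_subset.mp (nhdsWithin_mono _ (fun _ h ↦ ne_of_gt h) hneg)
  refine ⟨γstar, hγstar, fun γ hγ0 hγ ↦ ?_⟩
  have key := hsub ⟨hγ0, hγ⟩
  simp only [mem_ofPred_eq, Function.comp_apply] at key
  exact ⟨key, max_eq_left key.le, by rw [max_eq_left key.le, mul_zero]⟩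

/-- **Zero rate suffices for small delays.** With the triggering threshold
`J(γ) = (M/(Aρ0))(e^{Aγ}−1) + c`, for all sufficiently small delays `γ` the
quantity `1 + log₂(Abγ/ln(1 + (ρ0 − (M/(J(γ)A))(e^{Aγ}−1))/e^{Aγ}))` is
negative; hence the sufficient packet size `g*(γ)` equals `0` and the
sufficient information transmission rate of Corollary 1 equals `0`. -/
theorem zero_rate_small_delay
    (A M ρ0 b c : ℝ) (J : ℝ → ℝ)
    (hA : 0 < A) (hM : 0 ≤ M)
    (hρ0 : 0 < ρ0) (hρ1 : ρ0 < 1)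
    (hb : 1 < b) (hc : 0 < c)
    (hJ : ∀ γ, J γ = (M / (A * ρ0)) * (Real.exp (A * γ) - 1) + c) :
    ∃ γstar > (0 : ℝ), ∀ γ : ℝ, 0 < γ → γ < γstar →
      (1 + Real.logb 2 (A * b * γ /
          Real.log (1 + (ρ0 - (M / (J γ * A)) * (Real.exp (A * γ) - 1)) /
            Real.exp (A * γ))) < 0) ∧
      (max 0 (1 + Real.logb 2 (A * b * γ /
          Real.log (1 + (ρ0 - (M / (J γ * A)) * (Real.exp (A * γ) - 1)) /
            Real.exp (A * γ)))) = 0) ∧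
      ((A / Real.log ((J γ + M / A) / (ρ0 * J γ + M / A))) *
        max 0 (1 + Real.logb 2 (A * b * γ /
          Real.log (1 + (ρ0 - (M / (J γ * A)) * (Real.exp (A * γ) - 1)) /
            Real.exp (A * γ)))) = 0) :=
  zero_rate_small_delay_general A M ρ0 b c J hA hρ0 hb hc hJ
end

section
/- Fix real constants A > 0, M > 0, ρ0 ∈ (0,1), b > 1, and c > 0, and for γ > 0 define J(γ) := (M/(Aρ0))·(e^{Aγ} − 1) + c and the sufficient-rate expression R(γ) := ( A / ln( (J(γ) + M/A)/(ρ0·J(γ) + M/A) ) ) · max{0, 1 + log₂( A·b·γ / ln(1 + (ρ0 − (M/(J(γ)·A))·(e^{Aγ} − 1))/e^{Aγ}) )}. Then R(γ) → +∞ as γ → +∞; in particular, there exists γ̄ > 0 such that R(γ) > A/ln 2 for all γ > γ̄. (For large communication delays, the sufficient transmission rate of the event-triggered scheme grows without bound and eventually exceeds the rate A/ln 2 prescribed by the classical data-rate theorem.) -/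
open Set Filter

set_option maxHeartbeats 1000000

/-- **Large delays require rates beyond the data-rate theorem.** With the
triggering threshold `J(γ) = (M/(Aρ0))(e^{Aγ}−1) + c`, the sufficient
transmission rate `R(γ)` of Corollary 1 tends to `+∞` as `γ → +∞`; in
particular, beyond some delay `γ̄` it exceeds the data-rate-theorem rate
`A/ln 2`. -/
theorem rate_blowup_large_delay
    (A M ρ0 b c : ℝ) (J R : ℝ → ℝ)
    (hA : 0 < A) (hM : 0 < M)
    (hρ0 : 0 < ρ0) (hρ1 : ρ0 < 1)
    (hb : 1 < b) (hc : 0 < c)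
    (hJ : ∀ γ, J γ = (M / (A * ρ0)) * (Real.exp (A * γ) - 1) + c)
    (hR : ∀ γ, R γ =
      (A / Real.log ((J γ + M / A) / (ρ0 * J γ + M / A))) *
        max 0 (1 + Real.logb 2 (A * b * γ /
          Real.log (1 + (ρ0 - (M / (J γ * A)) * (Real.exp (A * γ) - 1)) /
            Real.exp (A * γ))))) :
    Tendsto R atTop atTop ∧
    ∃ γbar > (0 : ℝ), ∀ γ > γbar, R γ > A / Real.log 2 := by
  have hρinv : 1 < ρ0⁻¹ := one_lt_inv_iff₀.mpr ⟨hρ0, hρ1⟩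
  set ε := A / Real.log ρ0⁻¹ with hε
  have hlogρ : 0 < Real.log ρ0⁻¹ := Real.log_pos hρinv
  have hεpos : 0 < ε := div_pos hA hlogρ
  set K := A * b / ρ0 with hKdef
  have hKpos : 0 < K := by positivity
  have key : ∀ γ ≥ (1:ℝ), ε * (1 + Real.logb 2 (K * γ)) ≤ R γ := by
    intro γ hγ
    have hγ0 : (0:ℝ) < γ := lt_of_lt_of_le one_pos hγ
    have hE1 : 1 ≤ Real.exp (A * γ) := Real.one_le_exp (by positivity)
    have hE0 : 0 < Real.exp (A * γ) := Real.exp_pos _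
    have hJγ : J γ = M / (A * ρ0) * (Real.exp (A * γ) - 1) + c := hJ γ
    have hJc : c ≤ J γ := by
      rw [hJγ]
      nlinarith [div_nonneg hM.le (mul_pos hA hρ0).le]
    have hJ0 : 0 < J γ := lt_of_lt_of_le hc hJc
    -- identity for the inner term
    have hJ' : J γ * (A * ρ0) = M * (Real.exp (A * γ) - 1) + c * (A * ρ0) := by
      rw [hJγ]; field_simp
    have hid : ρ0 - M / (J γ * A) * (Real.exp (A * γ) - 1) = ρ0 * c / J γ := by
      have h1 : J γ * A ≠ 0 := by positivity
      field_simp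
      nlinarith [hJ']
    -- bounds on u := ρ0*c/J γ / E
    set u := ρ0 * c / J γ / Real.exp (A * γ) with hu
    have hu0 : 0 < u := by positivity
    have huρ : u ≤ ρ0 := by
      have h1 : ρ0 * c / J γ ≤ ρ0 := by
        rw [div_le_iff₀ hJ0]; nlinarith
      calc u ≤ ρ0 * c / J γ := div_le_self (by positivity) hE1
        _ ≤ ρ0 := h1
    have hlogu_pos : 0 < Real.log (1 + u) := Real.log_pos (by linarith)
    have hlogu_le : Real.log (1 + u) ≤ u := by
      have := Real.log_le_sub_one_of_pos (show (0:ℝ) < 1 + u by linarith)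
      linarith
    -- second factor lower bound
    have hhK : K * γ ≤ A * b * γ / Real.log (1 + u) := by
      have : K * γ = A * b * γ / ρ0 := by rw [hKdef]; ring
      rw [this]
      apply div_le_div_of_nonneg_left (by positivity) hlogu_pos (by linarith)
    have hKγpos : 0 < K * γ := by positivity
    have hlogb : Real.logb 2 (K * γ) ≤ Real.logb 2 (A * b * γ / Real.log (1 + u)) :=
      Real.logb_le_logb_of_le one_lt_two hKγpos hhK
    -- first factor lower bound
    have hQden : 0 < ρ0 * J γ + M / A := by positivity
    have hQ1 : 1 < (J γ + M / A) / (ρ0 * J γ + M / A) := by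
      rw [lt_div_iff₀ hQden]; nlinarith
    have hQle : (J γ + M / A) / (ρ0 * J γ + M / A) ≤ ρ0⁻¹ := by
      rw [div_le_iff₀ hQden, inv_mul_eq_div, le_div_iff₀ hρ0]
      have : 0 < M / A := by positivity
      nlinarith
    have hlogQpos : 0 < Real.log ((J γ + M / A) / (ρ0 * J γ + M / A)) := Real.log_pos hQ1
    have hlogQle : Real.log ((J γ + M / A) / (ρ0 * J γ + M / A)) ≤ Real.log ρ0⁻¹ :=
      Real.log_le_log (by linarith) hQle
    have hf : ε ≤ A / Real.log ((J γ + M / A) / (ρ0 * J γ + M / A)) := by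
      exact div_le_div_of_nonneg_left hA.le hlogQpos hlogQle
    -- put everything together
    rw [hR γ, hid]
    have hg : 1 + Real.logb 2 (K * γ) ≤
        max 0 (1 + Real.logb 2 (A * b * γ / Real.log (1 + ρ0 * c / J γ / Real.exp (A * γ)))) := by
      refine le_trans ?_ (le_max_right _ _)
      linarith
    calc ε * (1 + Real.logb 2 (K * γ))
        ≤ ε * max 0 (1 + Real.logb 2 (A * b * γ / Real.log (1 + ρ0 * c / J γ / Real.exp (A * γ)))) :=
          mul_le_mul_of_nonneg_left hg hεpos.le
      _ ≤ (A / Real.log ((J γ + M / A) / (ρ0 * J γ + M / A))) *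
          max 0 (1 + Real.logb 2 (A * b * γ / Real.log (1 + ρ0 * c / J γ / Real.exp (A * γ)))) :=
          mul_le_mul_of_nonneg_right hf (le_max_left _ _)
  have hφ : Tendsto (fun γ => ε * (1 + Real.logb 2 (K * γ))) atTop atTop := by
    apply Tendsto.const_mul_atTop hεpos
    apply tendsto_atTop_add_const_left
    exact (Real.tendsto_logb_atTop one_lt_two).comp (tendsto_id.const_mul_atTop hKpos)
  have hRtop : Tendsto R atTop atTop :=
    tendsto_atTop_mono' atTop (eventually_atTop.mpr ⟨1, key⟩) hφ
  refine ⟨hRtop, ?_⟩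
  obtain ⟨a, ha⟩ := eventually_atTop.mp (hRtop.eventually_gt_atTop (A / Real.log 2))
  exact ⟨max a 1, lt_of_lt_of_le one_pos (le_max_right a 1),
    fun γ hγ => ha γ (le_of_lt (lt_of_le_of_lt (le_max_left a 1) hγ))⟩
end
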